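/- arXiv:2211.07573 — 6 statements merged into one kernel-verified Lean document; each statement's English description precedes it below -/
import Mathlib

section
/- Let R₁, …, R_m be N×N row-stochastic matrices with non-negative entries and let R be the Nm×Nm cyclic block matrix whose (i, i+1 mod m) block is R_{(i mod m)+1} and whose other blocks are zero. Then R is irreducible if and only if for every i = 1, …, m the cyclic product R_{i+1} R_{i+2} ⋯ R_m R₁ ⋯ R_i is irreducible. -/
/-!
A path of length `k` in the block-cyclic matrix `R` moves from block `i` to block `i + k`, and
its weight is an entry of the product `R_{i+1} ⋯ R_{i+k}`. Hence `R ^ k` links block `i` to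
itself only when `m ∣ k`, where it is a power of the cyclic product at `i`: this gives the
forward direction. Conversely, to reach `(j, b)` from `(i, a)`, walk `d = j - i` steps to some
`(j, c)`, which is possible because every row of the row-stochastic product `R_{i+1} ⋯ R_{i+d}`
has a positive entry, and then go from `c` to `b` by `k` full turns using irreducibility of the
cyclic product at `j`.
-/

open Matrix

/-- A non-negative square matrix is irreducible: every entry of some positive
power is strictly positive. -/
def Irred {ι : Type*} (A : Matrix ι ι ℝ) [Fintype ι] [DecidableEq ι] : Prop :=
  ∀ i j : ι, ∃ k : ℕ, 1 ≤ k ∧ 0 < (A ^ k) i j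

/-- The cyclic product `R_{i+1} R_{i+2} ⋯ R_m R₁ ⋯ R_i`. -/
def cyclicProd {m N : ℕ} [NeZero m] (Rs : Fin m → Matrix (Fin N) (Fin N) ℝ)
    (i : Fin m) : Matrix (Fin N) (Fin N) ℝ :=
  ((List.range m).map (fun (k : ℕ) => Rs (i + 1 + (Fin.ofNat m k : Fin m)))).prod

open Fin.NatCast Fin.CommRing

namespace Matrix

variable {R l n o : Type*} [Fintype n] [Semiring R] [PartialOrder R] [IsStrictOrderedRing R]

theorem mul_apply_pos {A : Matrix l n R} {B : Matrix n o R} (hA : ∀ i j, 0 ≤ A i j)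
    (hB : ∀ i j, 0 ≤ B i j) {a : l} {b : o} {c : n} (hac : 0 < A a c) (hcb : 0 < B c b) :
    0 < (A * B) a b :=
  Finset.sum_pos' (fun _ _ => mul_nonneg (hA _ _) (hB _ _))
    ⟨c, Finset.mem_univ c, mul_pos hac hcb⟩

theorem exists_pos_of_mem_rowStochastic [DecidableEq n] {M : Matrix n n R}
    (hM : M ∈ rowStochastic R n) (i : n) : ∃ j, 0 < M i j := by
  by_contra! h
  have hzero : ∑ j, M i j = 0 :=
    Finset.sum_eq_zero fun j _ => ((nonneg_of_mem_rowStochastic hM).eq_of_not_lt (h j)).symm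
  exact zero_ne_one (hzero ▸ sum_row_of_mem_rowStochastic hM i)

end Matrix

section CyclicBlock

variable {α n : Type*} [Semiring α] [Fintype n] [DecidableEq n] {m : ℕ} [NeZero m]
  (Rs : Fin m → Matrix n n α)

def cyclicPartialProd (i : Fin m) (k : ℕ) : Matrix n n α :=
  ((List.range k).map fun t : ℕ => Rs (i + 1 + (t : Fin m))).prod

@[simp]
theorem cyclicPartialProd_zero (i : Fin m) : cyclicPartialProd Rs i 0 = 1 :=
  rfl

theorem cyclicPartialProd_succ (i : Fin m) (k : ℕ) :
    cyclicPartialProd Rs i (k + 1) = cyclicPartialProd Rs i k * Rs (i + k + 1) := by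
  simp [cyclicPartialProd, List.range_succ, add_right_comm]

theorem cyclicPartialProd_add (i : Fin m) (k l : ℕ) :
    cyclicPartialProd Rs i (k + l) =
      cyclicPartialProd Rs i k * cyclicPartialProd Rs (i + k) l := by
  induction l with
  | zero => simp
  | succ l ih =>
    rw [← add_assoc, cyclicPartialProd_succ, ih, cyclicPartialProd_succ, mul_assoc]
    push_cast
    ring_nf

theorem cyclicPartialProd_mul (i : Fin m) (k : ℕ) :
    cyclicPartialProd Rs i (m * k) = cyclicPartialProd Rs i m ^ k := by
  induction k with
  | zero => simp
  | succ k ih =>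
    rw [mul_add_one, cyclicPartialProd_add, ih, pow_succ, Nat.cast_mul, Fin.natCast_self,
      zero_mul, add_zero]

theorem cyclicPartialProd_mem_rowStochastic [PartialOrder α] [IsOrderedRing α]
    (hRs : ∀ k, Rs k ∈ rowStochastic α n) (i : Fin m) (k : ℕ) :
    cyclicPartialProd Rs i k ∈ rowStochastic α n :=
  Submonoid.list_prod_mem _ <| by simp [hRs]

theorem cyclicBlock_pow_apply (R : Matrix (Fin m × n) (Fin m × n) α)
    (hR : ∀ i j a b, R (i, a) (j, b) = if j = i + 1 then Rs j a b else 0)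
    (k : ℕ) (i j : Fin m) (a b : n) :
    (R ^ k) (i, a) (j, b) = if j = i + k then cyclicPartialProd Rs i k a b else 0 := by
  induction k generalizing j b with
  | zero =>
    by_cases h : j = i
    · simp [one_apply, h]
    · simp [one_apply, h, Ne.symm h]
  | succ k ih =>
    simp only [pow_succ, mul_apply, Fintype.sum_prod_type, ih, hR, ite_mul, zero_mul,
      Finset.sum_ite_irrel, Finset.sum_const_zero, Finset.sum_ite_eq', Finset.mem_univ,
      if_true, cyclicPartialProd_succ, Nat.cast_succ, ← add_assoc]
    split_ifs <;> simp [*]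

end CyclicBlock

theorem cyclicProd_eq_cyclicPartialProd {m N : ℕ} [NeZero m]
    (Rs : Fin m → Matrix (Fin N) (Fin N) ℝ) (i : Fin m) :
    cyclicProd Rs i = cyclicPartialProd Rs i m :=
  rfl

section Irreducible

variable {n : Type*} [Fintype n] [DecidableEq n] {m : ℕ} [NeZero m]
  {Rs : Fin m → Matrix n n ℝ} {R : Matrix (Fin m × n) (Fin m × n) ℝ}

theorem irred_cyclicPartialProd_of_irred
    (hR : ∀ i j a b, R (i, a) (j, b) = if j = i + 1 then Rs j a b else 0) (hirr : Irred R)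
    (i : Fin m) : Irred (cyclicPartialProd Rs i m) := by
  intro a b
  obtain ⟨K, hK, hpos⟩ := hirr (i, a) (i, b)
  rw [cyclicBlock_pow_apply Rs R hR] at hpos
  have hdvd : (K : Fin m) = 0 := by
    by_contra h
    simp [h] at hpos
  obtain ⟨t, rfl⟩ := Fin.natCast_eq_zero.1 hdvd
  refine ⟨t, Nat.pos_of_ne_zero ?_, ?_⟩
  · rintro rfl
    simp at hK
  · rwa [if_pos (by simp), cyclicPartialProd_mul] at hpos

theorem irred_of_irred_cyclicPartialProd (hRs : ∀ k, Rs k ∈ rowStochastic ℝ n)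
    (hR : ∀ i j a b, R (i, a) (j, b) = if j = i + 1 then Rs j a b else 0)
    (hirr : ∀ i, Irred (cyclicPartialProd Rs i m)) : Irred R := by
  have hP := cyclicPartialProd_mem_rowStochastic Rs hRs
  rintro ⟨i, a⟩ ⟨j, b⟩
  set d := (j - i).val
  have hd : i + (d : Fin m) = j := by simp [d]
  obtain ⟨c, hac⟩ := exists_pos_of_mem_rowStochastic (hP i d) a
  obtain ⟨k, hk, hcb⟩ := hirr j c b
  have hlen : 1 ≤ d + m * k :=
    le_add_left (Nat.one_le_iff_ne_zero.2 (mul_ne_zero (NeZero.ne m) (by omega)))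
  refine ⟨d + m * k, hlen, ?_⟩
  have hj : j = i + ((d + m * k : ℕ) : Fin m) := by simp [hd]
  rw [cyclicBlock_pow_apply Rs R hR, if_pos hj, cyclicPartialProd_add, hd, cyclicPartialProd_mul]
  exact mul_apply_pos (fun _ _ => nonneg_of_mem_rowStochastic (hP _ _))
    (fun _ _ => nonneg_of_mem_rowStochastic (pow_mem (hP _ _) _)) hac hcb

end Irreducible

theorem stmt_3 (m N : ℕ) [NeZero m] (Rs : Fin m → Matrix (Fin N) (Fin N) ℝ)
    (hR0 : ∀ k i j, 0 ≤ Rs k i j) (hR1 : ∀ k i, ∑ j, Rs k i j = 1)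
    (R : Matrix (Fin m × Fin N) (Fin m × Fin N) ℝ)
    (hR : ∀ i j a b, R (i, a) (j, b) = if j = i + 1 then Rs j a b else 0) :
    Irred R ↔ ∀ i : Fin m, Irred (cyclicProd Rs i) := by
  have hRs : ∀ k, Rs k ∈ rowStochastic ℝ (Fin N) := fun k =>
    mem_rowStochastic_iff_sum.2 ⟨hR0 k, hR1 k⟩
  simp only [cyclicProd_eq_cyclicPartialProd]
  exact ⟨irred_cyclicPartialProd_of_irred hR, irred_of_irred_cyclicPartialProd hRs hR⟩
end

section
/- For all real α, β, γ with 0 < α, β, γ < 1, the two inequalities 6α − 3αγ + αβγ > 4 and 6β − 3αβ + αβγ > 4 cannot hold simultaneously. -/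
theorem stmt_7 (α β γ : ℝ) (hα : 0 < α ∧ α < 1) (hβ : 0 < β ∧ β < 1)
    (hγ : 0 < γ ∧ γ < 1) :
    ¬ (6 * α - 3 * α * γ + α * β * γ > 4 ∧ 6 * β - 3 * α * β + α * β * γ > 4) := by
  obtain ⟨ha1, ha2⟩ := hα
  obtain ⟨hb1, hb2⟩ := hβ
  obtain ⟨hg1, hg2⟩ := hγ
  rintro ⟨h1, h2⟩
  nlinarith [mul_pos ha1 hb1, mul_pos hb1 hg1, mul_pos ha1 hg1,
    mul_pos (mul_pos ha1 hb1) hg1, mul_pos (sub_pos.2 ha2) (sub_pos.2 hb2),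
    mul_pos (sub_pos.2 ha2) (sub_pos.2 hg2), mul_pos (sub_pos.2 hb2) (sub_pos.2 hg2),
    mul_pos (mul_pos (sub_pos.2 ha2) (sub_pos.2 hb2)) (sub_pos.2 hg2),
    mul_pos (mul_pos ha1 hb1) (sub_pos.2 hg2),
    mul_pos (mul_pos ha1 (sub_pos.2 hb2)) hg1,
    mul_pos (mul_pos (sub_pos.2 ha2) hb1) hg1]
end

section
/- For all real α, β, γ with 0 < α, β, γ < 1, no two of the following three inequalities can hold simultaneously: 6α − 3αγ + αβγ > 4, 6β − 3αβ + αβγ > 4, 6γ − 3βγ + αβγ > 4. -/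
lemma key (a b c : ℝ) (ha : 0 < a ∧ a < 1) (hb : 0 < b ∧ b < 1) (hc : 0 < c ∧ c < 1)
    (h1 : 6 * a - 3 * a * c + a * b * c > 4) (h2 : 6 * b - 3 * a * b + a * b * c > 4) :
    False := by
  obtain ⟨ha0, ha1⟩ := ha; obtain ⟨hb0, hb1⟩ := hb; obtain ⟨hc0, hc1⟩ := hc
  nlinarith [mul_pos ha0 hb0, mul_pos hb0 hc0, mul_pos ha0 hc0,
    mul_pos (mul_pos ha0 hb0) hc0, sq_nonneg (a - b), sq_nonneg (a + b - 2),
    mul_pos (sub_pos.2 ha1) (sub_pos.2 hb1), mul_pos (sub_pos.2 hb1) (sub_pos.2 hc1),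
    mul_pos (sub_pos.2 ha1) (sub_pos.2 hc1),
    mul_pos (mul_pos (sub_pos.2 ha1) (sub_pos.2 hb1)) (sub_pos.2 hc1),
    mul_pos (mul_pos ha0 (sub_pos.2 hb1)) (sub_pos.2 hc1),
    mul_pos (mul_pos hb0 (sub_pos.2 ha1)) (sub_pos.2 hc1),
    mul_pos (mul_pos hc0 (sub_pos.2 ha1)) (sub_pos.2 hb1)]

theorem stmt_8 (α β γ : ℝ) (hα : 0 < α ∧ α < 1) (hβ : 0 < β ∧ β < 1)
    (hγ : 0 < γ ∧ γ < 1) :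
    ¬ (6 * α - 3 * α * γ + α * β * γ > 4 ∧ 6 * β - 3 * α * β + α * β * γ > 4) ∧
    ¬ (6 * β - 3 * α * β + α * β * γ > 4 ∧ 6 * γ - 3 * β * γ + α * β * γ > 4) ∧
    ¬ (6 * α - 3 * α * γ + α * β * γ > 4 ∧ 6 * γ - 3 * β * γ + α * β * γ > 4) := by
  refine ⟨fun ⟨h1, h2⟩ => key α β γ hα hβ hγ h1 h2,
          fun ⟨h1, h2⟩ => key β γ α hβ hγ hα (by linarith [h1]; ) (by linarith [h2]),
          fun ⟨h1, h2⟩ => key γ α β hγ hα hβ (by nlinarith) (by nlinarith)⟩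
end

section
/- Let n ≥ 2 and let a₁, …, a_n be real numbers with 0 < a_i < 1 for all i. Then it is impossible that for every i = 1, …, n the inequality (n² − 1)a_i + (n − 1)·∑_{j ≠ i} a_j − n·a_i·∑_{j ≠ i} a_j > n(n − 1) holds. -/
open Finset

theorem stmt_9 (n : ℕ) (hn : 2 ≤ n) (a : Fin n → ℝ)
    (ha : ∀ i, 0 < a i ∧ a i < 1) :
    ¬ (∀ i : Fin n,
        ((n : ℝ) ^ 2 - 1) * a i + ((n : ℝ) - 1) * ∑ j ∈ univ.erase i, a j
          - (n : ℝ) * a i * ∑ j ∈ univ.erase i, a j > (n : ℝ) * ((n : ℝ) - 1)) := by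
  intro h
  set S : ℝ := ∑ j, a j with hS
  set T : ℝ := ∑ j, (a j) ^ 2 with hT
  have hnpos : (0 : ℝ) < n := by positivity
  -- rewrite each inequality using erase sum = S - a i
  have key : ∀ i : Fin n,
      ((n : ℝ) ^ 2 - 1) * a i + ((n : ℝ) - 1) * (S - a i)
        - (n : ℝ) * a i * (S - a i) > (n : ℝ) * ((n : ℝ) - 1) := by
    intro i
    have he : ∑ j ∈ univ.erase i, a j = S - a i := by
      have := Finset.sum_erase_add univ a (Finset.mem_univ i)
      linarith
    have := h i
    rw [he] at this
    exact this
  -- sum over all i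
  have hne : (univ : Finset (Fin n)).Nonempty := by
    have : 0 < n := by omega
    exact Finset.univ_nonempty_iff.mpr ⟨⟨0, this⟩⟩
  have hsum := Finset.sum_lt_sum_of_nonempty hne (fun i _ => key i)
  have hcard : ((univ : Finset (Fin n)).card : ℝ) = n := by
    simp
  have hL : ∑ i : Fin n, (((n : ℝ) ^ 2 - 1) * a i + ((n : ℝ) - 1) * (S - a i)
        - (n : ℝ) * a i * (S - a i))
      = ((n : ℝ) ^ 2 - 1) * S + ((n : ℝ) - 1) * ((n : ℝ) * S - S)
        - (n : ℝ) * (S * S - T) := by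
    simp only [mul_sub, sub_mul, Finset.sum_sub_distrib, Finset.sum_add_distrib,
      ← Finset.mul_sum, ← Finset.sum_mul, Finset.sum_const, card_univ,
      Fintype.card_fin, nsmul_eq_mul]
    have : ∑ i : Fin n, (n : ℝ) * a i * a i = n * T := by
      rw [hT, Finset.mul_sum]
      congr 1; ext i; ring
    rw [this]; ring
  rw [hL, Finset.sum_const, card_univ, Fintype.card_fin, nsmul_eq_mul] at hsum
  -- hsum : n * (n * (n-1)) < (n²-1) S + (n-1)(nS - S) - n (S·S - T)
  -- second ingredient: (n - S)^2 ≥ ∑ (1 - a i)^2 = n - 2S + T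
  have hb : ∑ i : Fin n, (1 - a i) ^ 2 ≤ (∑ i : Fin n, (1 - a i)) ^ 2 :=
    Finset.sum_sq_le_sq_sum_of_nonneg (fun i _ => by have := (ha i).2; linarith)
  have h1 : (∑ i : Fin n, (1 - a i)) = (n : ℝ) - S := by
    simp [Finset.sum_sub_distrib, hS]
  have h2 : ∑ i : Fin n, (1 - a i) ^ 2 = (n : ℝ) - 2 * S + T := by
    have : ∀ i : Fin n, (1 - a i) ^ 2 = 1 - 2 * a i + (a i) ^ 2 := fun i => by ring
    simp only [this, Finset.sum_add_distrib, Finset.sum_sub_distrib,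
      Finset.sum_const, card_univ, Fintype.card_fin, nsmul_eq_mul, mul_one,
      ← Finset.mul_sum, ← hS, ← hT]
  rw [h1, h2] at hb
  nlinarith [hb, hsum, hnpos]
end

section
/- Let n ≥ 2, let a₁, …, a_n ∈ (0,1), and define the n×n matrix M = (R₁ + ⋯ + R_n)/n, where R_k has k-th column entries (R_k)_{kk} = 1 and (R_k)_{ik} = 1 − a_k for i ≠ k, off-column entries (R_k)_{ii} = a_k for i ≠ k, and all other entries 0. Then the row vector π_s with i-th entry (1 − a_i)/(n − (a₁ + ⋯ + a_n)) satisfies π_s · M = π_s and its entries sum to 1. -/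
open Matrix Finset

theorem stmt_11 (n : ℕ) (hn : 2 ≤ n) (a : Fin n → ℝ)
    (ha : ∀ i, 0 < a i ∧ a i < 1)
    (R : Fin n → Matrix (Fin n) (Fin n) ℝ)
    (hR : ∀ k i j, R k i j =
      if i = k ∧ j = k then 1
      else if i ≠ k ∧ j = k then 1 - a k
      else if i ≠ k ∧ j = i then a k
      else 0)
    (M : Matrix (Fin n) (Fin n) ℝ) (hM : M = (n : ℝ)⁻¹ • ∑ k, R k)
    (πs : Fin n → ℝ) (hπ : ∀ i, πs i = (1 - a i) / ((n : ℝ) - ∑ j, a j)) :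
    πs ᵥ* M = πs ∧ ∑ i, πs i = 1 := by
  have hne : (Finset.univ : Finset (Fin n)).Nonempty := by
    refine Finset.univ_nonempty_iff.mpr ?_
    exact Fin.pos_iff_nonempty.mp (by omega)
  have hS : ∑ j, a j < (n : ℝ) := by
    have h := Finset.sum_lt_sum_of_nonempty hne (fun i _ => (ha i).2)
    simpa using h
  have hD : (0:ℝ) < (n:ℝ) - ∑ j, a j := sub_pos.mpr hS
  have hDne : ((n:ℝ) - ∑ j, a j) ≠ 0 := ne_of_gt hD
  have hnne : (n:ℝ) ≠ 0 := by positivity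
  have hsum : ∑ i, πs i = 1 := by
    simp only [hπ, ← Finset.sum_div]
    rw [Finset.sum_sub_distrib]
    simp only [Finset.sum_const, Finset.card_univ, Fintype.card_fin, nsmul_eq_mul, mul_one]
    field_simp
  refine ⟨?_, hsum⟩
  funext j
  have hrow : ∀ k, ∑ i, πs i * R k i j =
      (if j = k then πs k + (1 - a k) * (1 - πs k) else πs j * a k) := by
    intro k
    by_cases hjk : j = k
    · subst hjk
      simp only [if_pos rfl]
      have h1 : ∀ i, πs i * R j i j = (if i = j then πs j * 1 else πs i * (1 - a j)) := by
        intro i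
        by_cases hij : i = j
        · subst hij; simp [hR]
        · simp [hR, hij]
      rw [Finset.sum_congr rfl (fun i _ => h1 i), Finset.sum_ite,
        Finset.filter_eq' Finset.univ j]
      simp only [Finset.mem_univ, if_pos, Finset.sum_singleton, mul_one]
      have h2 : ∑ i ∈ Finset.univ.filter (fun i => ¬ i = j), πs i * (1 - a j)
          = (1 - πs j) * (1 - a j) := by
        rw [← Finset.sum_mul]
        congr 1
        have h3 := hsum
        rw [← Finset.sum_erase_add _ _ (Finset.mem_univ j)] at h3
        rw [Finset.filter_ne' Finset.univ j]
        linarith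
      rw [h2]; ring
    · rw [if_neg hjk]
      have h1 : ∀ i, πs i * R k i j = (if i = j then πs j * a k else 0) := by
        intro i
        by_cases hij : i = j
        · subst hij
          have hik : i ≠ k := hjk
          simp [hR, hik]
        · have hji : ¬ j = i := fun h => hij h.symm
          simp [hR, hjk, hji, hij]
      rw [Finset.sum_congr rfl (fun i _ => h1 i), Finset.sum_ite_eq' Finset.univ j]
      simp
  have hcol : (πs ᵥ* M) j = (n:ℝ)⁻¹ * ∑ k, ∑ i, πs i * R k i j := by
    calc (πs ᵥ* M) j = ∑ i, πs i * ((n:ℝ)⁻¹ * ∑ k, R k i j) := by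
          simp [vecMul, dotProduct, hM, Matrix.sum_apply]
      _ = ∑ i, ∑ k, (n:ℝ)⁻¹ * (πs i * R k i j) :=
          Finset.sum_congr rfl fun i _ => by
            rw [Finset.mul_sum, Finset.mul_sum]
            exact Finset.sum_congr rfl fun k _ => by ring
      _ = ∑ k, ∑ i, (n:ℝ)⁻¹ * (πs i * R k i j) := Finset.sum_comm
      _ = (n:ℝ)⁻¹ * ∑ k, ∑ i, πs i * R k i j := by
          rw [Finset.mul_sum]
          exact Finset.sum_congr rfl fun k _ => by rw [Finset.mul_sum]
  have h5 : (∑ k, ∑ i, πs i * R k i j)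
      = ∑ k, (if j = k then πs k + (1 - a k) * (1 - πs k) else πs j * a k) :=
    Finset.sum_congr rfl (fun k _ => hrow k)
  rw [hcol, h5, ← Finset.add_sum_erase Finset.univ
    (fun k => if j = k then πs k + (1 - a k) * (1 - πs k) else πs j * a k)
    (Finset.mem_univ j)]
  rw [if_pos rfl]
  have h4 : ∑ k ∈ Finset.univ.erase j, (if j = k then πs k + (1 - a k) * (1 - πs k) else πs j * a k)
      = πs j * ((∑ k, a k) - a j) := by
    rw [Finset.sum_congr rfl (fun k hk => if_neg (fun h => (Finset.mem_erase.mp hk).1 h.symm)),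
      ← Finset.mul_sum]
    congr 1
    rw [← Finset.sum_erase_add _ _ (Finset.mem_univ j)]
    ring
  rw [h4]
  rw [hπ j]
  field_simp
  ring
end

section
/- Let 0 < α, β, γ < 1 and R₁, R₂, R₃ be the 3×3 matrices of the 3-urn-3-color model (R₁ = [[α/2, α/2, 1−α],[α/2, α/2, 1−α],[0,0,1]], R₂ = [[β/2, 1−β, β/2],[0,1,0],[β/2, 1−β, β/2]], R₃ = [[1,0,0],[1−γ, γ/2, γ/2],[1−γ, γ/2, γ/2]]). Let D = 2 + αβγ/4. Then the row vector π₁ = ((α − αγ/2 + αβγ/4)/D, (α − αγ/2 + αβγ/4)/D, (2 − 2α + αγ − αβγ/4)/D) satisfies π₁ · (R₂R₃R₁) = π₁ and its entries sum to 1. -/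
open Matrix

lemma vecMul3 (v : Fin 3 → ℝ) (a b c d e f g h i : ℝ) :
    v ᵥ* !![a,b,c;d,e,f;g,h,i] =
      ![v 0 * a + v 1 * d + v 2 * g,
        v 0 * b + v 1 * e + v 2 * h,
        v 0 * c + v 1 * f + v 2 * i] := by
  funext j
  fin_cases j <;>
    simp [Matrix.vecMul, dotProduct, Fin.sum_univ_three]

set_option maxHeartbeats 2000000 in
theorem stmt_14 (α β γ : ℝ) (hα : 0 < α ∧ α < 1) (hβ : 0 < β ∧ β < 1)
    (hγ : 0 < γ ∧ γ < 1) :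
    let R₁ : Matrix (Fin 3) (Fin 3) ℝ :=
      !![α / 2, α / 2, 1 - α; α / 2, α / 2, 1 - α; 0, 0, 1]
    let R₂ : Matrix (Fin 3) (Fin 3) ℝ :=
      !![β / 2, 1 - β, β / 2; 0, 1, 0; β / 2, 1 - β, β / 2]
    let R₃ : Matrix (Fin 3) (Fin 3) ℝ :=
      !![1, 0, 0; 1 - γ, γ / 2, γ / 2; 1 - γ, γ / 2, γ / 2]
    let D : ℝ := 2 + α * β * γ / 4
    let π₁ : Fin 3 → ℝ :=
      ![(α - α * γ / 2 + α * β * γ / 4) / D,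
        (α - α * γ / 2 + α * β * γ / 4) / D,
        (2 - 2 * α + α * γ - α * β * γ / 4) / D]
    π₁ ᵥ* (R₂ * R₃ * R₁) = π₁ ∧ ∑ i, π₁ i = 1 := by
  intro R₁ R₂ R₃ D π₁
  have h0 : 0 < α * β * γ := mul_pos (mul_pos hα.1 hβ.1) hγ.1
  have hD : D ≠ 0 := by simp only [D]; nlinarith
  constructor
  · rw [← Matrix.vecMul_vecMul, ← Matrix.vecMul_vecMul]
    simp only [R₁, R₂, R₃, vecMul3]
    funext i
    fin_cases i <;>
    · simp only [π₁, Matrix.cons_val_zero, Matrix.cons_val_one,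
        Matrix.head_cons, Matrix.cons_val_two, Matrix.tail_cons]
      field_simp
      ring
  · simp only [π₁, Fin.sum_univ_three, Matrix.cons_val_zero, Matrix.cons_val_one,
      Matrix.head_cons, Matrix.cons_val_two, Matrix.tail_cons]
    field_simp
    ring
end
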